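/- arXiv:1109.6180 — 4 statements merged into one kernel-verified Lean document; each statement's English description precedes it below -/
import Mathlib

section
/- Let p ≥ 2 be a natural number and let x_1,…,x_t be a sequence of t ≥ p+1 nonzero elements of ℤ/pℤ. Then there exists a pair of indices k_1, k_2 ∈ {1,…,t} with k_1 ≠ k_2 and x_{k_1} = x_{k_2}, together with a subset of indices {i_1,…,i_r} ⊆ {1,…,t} \ {k_1,k_2} such that x_{k_1} + x_{i_1} + … + x_{i_r} = 0 in ℤ/pℤ. -/
open Finset

section Helpers

variable {H : Type*} [AddCommGroup H]

/-- Reduce an integer multiple of `w` to a natural multiple below `addOrderOf w`. -/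
lemma zsmul_reduce (w : H) (hfin : IsOfFinAddOrder w) (k : ℤ) :
    ∃ c : ℕ, c < addOrderOf w ∧ k • w = c • w := by
  set e := addOrderOf w with he
  have hepos : 0 < e := hfin.addOrderOf_pos
  have heZ : (0 : ℤ) < (e : ℤ) := by exact_mod_cast hepos
  refine ⟨(k % (e : ℤ)).toNat, ?_, ?_⟩
  · have h1 : k % (e : ℤ) < (e : ℤ) := Int.emod_lt_of_pos k heZ
    omega
  · have h0 : 0 ≤ k % (e : ℤ) := Int.emod_nonneg k (by omega)
    have hdecomp : k = (e : ℤ) * (k / (e : ℤ)) + k % (e : ℤ) := (Int.mul_ediv_add_emod k e).symm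
    calc k • w = ((e : ℤ) * (k / (e : ℤ)) + k % (e : ℤ)) • w := by rw [← hdecomp]
    _ = (k / (e : ℤ)) • ((e : ℤ) • w) + (k % (e : ℤ)) • w := by
        rw [add_zsmul, mul_comm, mul_zsmul]
    _ = (k % (e : ℤ)) • w := by
        rw [show ((e : ℤ) • w) = (e : ℕ) • w from natCast_zsmul w e,
          addOrderOf_nsmul_eq_zero w, smul_zero, zero_add]
    _ = ((k % (e : ℤ)).toNat : ℤ) • w := by rw [Int.toNat_of_nonneg h0]
    _ = (k % (e : ℤ)).toNat • w := natCast_zsmul w _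

end Helpers


section Olson

variable {H : Type*} [AddCommGroup H] [Finite H] [DecidableEq H] {ι : Type*} [DecidableEq ι]

/-- Olson's lemma: a "zero-sum free" finite family has at least `|T| + 1` distinct subset sums. -/
lemma olson (y : ι → H) (T : Finset ι)
    (hzsf : ∀ J ⊆ T, J.Nonempty → (∑ i ∈ J, y i) ≠ 0) :
    T.card + 1 ≤ (T.powerset.image (fun J => ∑ i ∈ J, y i)).card := by
  induction T using Finset.induction_on with
  | empty => simp
  | @insert a T ha IH =>
    have hzsfT : ∀ J ⊆ T, J.Nonempty → (∑ i ∈ J, y i) ≠ 0 :=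
      fun J hJ hne => hzsf J (hJ.trans (Finset.subset_insert a T)) hne
    have hIH := IH hzsfT
    set A := T.powerset.image (fun J => ∑ i ∈ J, y i) with hA
    -- the new sum set contains A and (y a + ·) '' A
    have hsub1 : A ⊆ (insert a T).powerset.image (fun J => ∑ i ∈ J, y i) := by
      apply Finset.image_subset_image
      exact Finset.powerset_mono.mpr (Finset.subset_insert a T)
    have hmem0 : (0 : H) ∈ A := by
      apply Finset.mem_image.mpr
      exact ⟨∅, Finset.mem_powerset.mpr (Finset.empty_subset T), by simp⟩
    -- key: ∃ z ∈ A with y a + z ∉ A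
    have hkey : ∃ z ∈ A, y a + z ∉ A := by
      by_contra hcon
      push_neg at hcon
      -- then A + y a = A, so all multiples of y a are in A
      have hmul : ∀ n : ℕ, n • (y a) ∈ A := by
        intro n
        induction n with
        | zero => simpa using hmem0
        | succ n ihn =>
          have h := hcon _ ihn
          rw [succ_nsmul]
          rwa [add_comm] at h
      have hfin : IsOfFinAddOrder (y a) := isOfFinAddOrder_of_finite (y a)
      have hordpos : 0 < addOrderOf (y a) := addOrderOf_pos (y a)
      have hneg : -(y a) ∈ A := by
        have h1 := hmul (addOrderOf (y a) - 1)
        have h2 : (addOrderOf (y a) - 1) • (y a) = -(y a) := by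
          have : (addOrderOf (y a) - 1 + 1) • (y a) = 0 := by
            rw [Nat.sub_add_cancel hordpos]
            exact addOrderOf_nsmul_eq_zero (y a)
          rw [succ_nsmul] at this
          exact eq_neg_of_add_eq_zero_left this
        rwa [h2] at h1
      obtain ⟨J, hJ, hJsum⟩ := Finset.mem_image.mp hneg
      have hJT : J ⊆ T := Finset.mem_powerset.mp hJ
      have haJ : a ∉ J := fun h => ha (hJT h)
      have : (∑ i ∈ insert a J, y i) = 0 := by
        rw [Finset.sum_insert haJ, hJsum]; abel
      exact hzsf (insert a J) (Finset.insert_subset_insert a hJT)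
        ⟨a, Finset.mem_insert_self a J⟩ this
    obtain ⟨z, hzA, hznA⟩ := hkey
    have hyza : y a + z ∈ (insert a T).powerset.image (fun J => ∑ i ∈ J, y i) := by
      obtain ⟨J, hJ, hJsum⟩ := Finset.mem_image.mp hzA
      have hJT : J ⊆ T := Finset.mem_powerset.mp hJ
      have haJ : a ∉ J := fun h => ha (hJT h)
      apply Finset.mem_image.mpr
      refine ⟨insert a J, Finset.mem_powerset.mpr (Finset.insert_subset_insert a hJT), ?_⟩
      rw [Finset.sum_insert haJ, hJsum]
    have : insert (y a + z) A ⊆ (insert a T).powerset.image (fun J => ∑ i ∈ J, y i) :=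
      Finset.insert_subset hyza hsub1
    have hcard := Finset.card_le_card this
    rw [Finset.card_insert_of_notMem hznA] at hcard
    rw [Finset.card_insert_of_notMem ha]
    omega

end Olson


section SwapCore

variable {G : Type*} [AddCommGroup G] {ι : Type*} [DecidableEq ι]

/-- Swap core lemma: if all `ℓ`-subsets of `C` have the same `x`-sum and are
"class-closed" within `C`, with `1 ≤ ℓ < |C|`, we get a contradiction. -/
lemma swap_core (x : ι → G) (C : Finset ι) (ℓ : ℕ) (s₀ : G)
    (hℓ1 : 1 ≤ ℓ) (hℓ2 : ℓ < C.card)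
    (hall : ∀ A ⊆ C, A.card = ℓ →
      (∑ i ∈ A, x i) = s₀ ∧ ∀ i ∈ A, ∀ i' ∈ C, x i' = x i → i' ∈ A) :
    False := by
  by_cases hconst : ∀ a ∈ C, ∀ b ∈ C, x a = x b
  · obtain ⟨A, hAC, hAcard⟩ := Finset.exists_subset_card_eq (le_of_lt hℓ2)
    obtain ⟨hs, hcl⟩ := hall A hAC hAcard
    have hAne : A.Nonempty := Finset.card_pos.mp (by omega)
    obtain ⟨a, ha⟩ := hAne
    have hAltC : A.card < C.card := by omega
    obtain ⟨b, hbC, hbA⟩ : ∃ b ∈ C, b ∉ A := by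
      by_contra hcon
      push_neg at hcon
      have : C ⊆ A := fun i hi => hcon i hi
      have := Finset.card_le_card this
      omega
    exact hbA (hcl a ha b hbC (hconst b hbC a (hAC ha)))
  · push_neg at hconst
    obtain ⟨a, haC, b, hbC, hab⟩ := hconst
    have hba : a ≠ b := fun h => hab (by rw [h])
    -- choose A₀ ⊆ C \ {a,b} of size ℓ - 1
    have hcard' : ℓ - 1 ≤ ((C.erase a).erase b).card := by
      rw [Finset.card_erase_of_mem (Finset.mem_erase.mpr ⟨fun h => hba h.symm, hbC⟩),
        Finset.card_erase_of_mem haC]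
      omega
    obtain ⟨A₀, hA₀, hA₀card⟩ := Finset.exists_subset_card_eq hcard'
    have haA₀ : a ∉ A₀ := fun h => (Finset.mem_erase.mp (Finset.mem_erase.mp (hA₀ h)).2).1 rfl
    have hbA₀ : b ∉ A₀ := fun h => (Finset.mem_erase.mp (hA₀ h)).1 rfl
    have hA₀C : A₀ ⊆ C := fun i hi => Finset.mem_of_mem_erase (Finset.mem_of_mem_erase (hA₀ hi))
    have h1 := hall (insert a A₀) (Finset.insert_subset haC hA₀C)
      (by rw [Finset.card_insert_of_notMem haA₀]; omega)
    have h2 := hall (insert b A₀) (Finset.insert_subset hbC hA₀C)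
      (by rw [Finset.card_insert_of_notMem hbA₀]; omega)
    have e1 : x a + ∑ i ∈ A₀, x i = s₀ := by
      rw [← Finset.sum_insert haA₀]; exact h1.1
    have e2 : x b + ∑ i ∈ A₀, x i = s₀ := by
      rw [← Finset.sum_insert hbA₀]; exact h2.1
    exact hab (add_right_cancel (e1.trans e2.symm))

end SwapCore


variable {G : Type*} [AddCommGroup G] [Finite G] {ι : Type*} [DecidableEq ι]

lemma key : ∀ (m : ℕ) (K : AddSubgroup G) (_ : K.index = m) (S : Finset ι) (x : ι → G),
    (∀ i ∈ S, x i ∉ K) →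
    (∀ J ⊆ S, (∑ i ∈ J, x i) ∈ K →
      (∑ i ∈ J, x i) = 0 ∧ ∀ i ∈ J, ∀ i' ∈ S, x i' = x i → i' ∈ J) →
    S.card ≤ m := by
  intro m
  induction m using Nat.strong_induction_on with
  | _ m IH =>
    intro K hK S x h0 h1
    classical
    by_contra hbig
    push_neg at hbig
    -- hbig : m < S.card
    set φ := QuotientAddGroup.mk' K with hφ
    set y : ι → G ⧸ K := fun i => φ (x i) with hy
    have hyzero : ∀ J : Finset ι, ((∑ i ∈ J, x i) ∈ K ↔ (∑ i ∈ J, y i) = 0) := by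
      intro J
      rw [hy]
      simp only [← map_sum]
      rw [hφ]
      constructor
      · intro h
        exact (QuotientAddGroup.eq_zero_iff _).mpr h
      · intro h
        exact (QuotientAddGroup.eq_zero_iff _).mp h
    have h0' : ∀ i ∈ S, y i ≠ 0 := by
      intro i hi hcon
      exact h0 i hi ((QuotientAddGroup.eq_zero_iff _).mp hcon)
    have hfinQ : Finite (G ⧸ K) := Quotient.finite _
    have hcardQ : Nat.card (G ⧸ K) = m := hK
    -- the swap theorem
    have swap : ∀ T ⊆ S, (∑ i ∈ T, x i) ∈ K → ∀ v : G ⧸ K,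
        (∀ i ∈ T, y i ≠ v) ∨ (∀ i ∈ S, y i = v → i ∈ T) := by
      intro T hTS hTK v
      set C := S.filter (fun i => y i = v) with hC
      have hCS : C ⊆ S := Finset.filter_subset _ _
      have hCy : ∀ i ∈ C, y i = v := fun i hi => (Finset.mem_filter.mp hi).2
      by_cases hzero : (T ∩ C).card = 0
      · left
        intro i hiT hyiv
        have : i ∈ T ∩ C := Finset.mem_inter.mpr
          ⟨hiT, Finset.mem_filter.mpr ⟨hTS hiT, hyiv⟩⟩
        rw [Finset.card_eq_zero] at hzero
        simp [hzero] at this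
      by_cases hfull : C ⊆ T
      · right
        intro i hiS hyiv
        exact hfull (Finset.mem_filter.mpr ⟨hiS, hyiv⟩)
      exfalso
      set ℓ := (T ∩ C).card with hℓ
      have hℓ1 : 1 ≤ ℓ := by omega
      have hℓ2 : ℓ < C.card := by
        have hsub : T ∩ C ⊆ C := Finset.inter_subset_right
        have hle := Finset.card_le_card hsub
        rcases lt_or_eq_of_le hle with h | h
        · exact h
        · exfalso
          have heq : T ∩ C = C := Finset.eq_of_subset_of_card_le hsub (le_of_eq h.symm)
          apply hfull
          intro i hi
          rw [← heq] at hi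
          exact (Finset.mem_inter.mp hi).1
      -- sum of y over T equals sum over T \ C plus ℓ • v
      have hTsplit : ∀ (f : ι → G ⧸ K), (∑ i ∈ T, f i) = (∑ i ∈ T \ C, f i) + ∑ i ∈ T ∩ C, f i := by
        intro f
        rw [add_comm, Finset.sum_inter_add_sum_sdiff]
      have hTCy : (∑ i ∈ T ∩ C, y i) = ℓ • v := by
        rw [Finset.sum_congr rfl (fun i hi => hCy i (Finset.mem_inter.mp hi).2)]
        rw [Finset.sum_const]
      apply swap_core x C ℓ (- ∑ i ∈ T \ C, x i) hℓ1 hℓ2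
      intro A hAC hAcard
      set T' := (T \ C) ∪ A with hT'
      have hdisj : Disjoint (T \ C) A := by
        apply Finset.disjoint_left.mpr
        intro i hiTC hiA
        exact (Finset.mem_sdiff.mp hiTC).2 (hAC hiA)
      have hT'S : T' ⊆ S := Finset.union_subset ((Finset.sdiff_subset).trans hTS) (hAC.trans hCS)
      have hT'sum : (∑ i ∈ T', x i) = (∑ i ∈ T \ C, x i) + ∑ i ∈ A, x i :=
        Finset.sum_union hdisj
      have hT'K : (∑ i ∈ T', x i) ∈ K := by
        rw [hyzero]
        have : (∑ i ∈ T', y i) = (∑ i ∈ T \ C, y i) + ∑ i ∈ A, y i := Finset.sum_union hdisj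
        rw [this]
        have hAy : (∑ i ∈ A, y i) = ℓ • v := by
          rw [Finset.sum_congr rfl (fun i hi => hCy i (hAC hi)), Finset.sum_const, hAcard]
        rw [hAy]
        have hTy : (∑ i ∈ T \ C, y i) + ℓ • v = 0 := by
          rw [← hTCy, ← hTsplit y]
          exact (hyzero T).mp hTK
        exact hTy
      obtain ⟨hz, hcl⟩ := h1 T' hT'S hT'K
      constructor
      · rw [hT'sum] at hz
        exact eq_neg_of_add_eq_zero_right hz
      · intro i hiA i' hi'C hxi
        have hi'T' := hcl i (Finset.mem_union_right _ hiA) i' (hCS hi'C) hxi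
        rcases Finset.mem_union.mp hi'T' with h | h
        · exact absurd hi'C (Finset.mem_sdiff.mp h).2
        · exact h
    -- case split on the existence of a block
    by_cases hB : ∃ i₀ ∈ S, ∃ B ⊆ S, i₀ ∈ B ∧ (∀ i ∈ B, y i = y i₀) ∧
        B.card = addOrderOf (y i₀) ∧ (∑ i ∈ B, x i) = 0 ∧
        (∀ i ∈ B, ∀ i' ∈ S, x i' = x i → i' ∈ B)
    · -- block case: recursion to a larger subgroup
      obtain ⟨i₀, hi₀S, B, hBS, hi₀B, hBy, hBcard, hBsum, hBcl⟩ := hB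
      set w := y i₀ with hw
      set e := addOrderOf w with he
      have hw0 : w ≠ 0 := h0' i₀ hi₀S
      have hwfin : IsOfFinAddOrder w := isOfFinAddOrder_of_finite w
      have hepos : 0 < e := hwfin.addOrderOf_pos
      have he1 : e ≠ 1 := by
        intro h
        apply hw0
        apply AddMonoid.addOrderOf_eq_one_iff.mp
        rw [← he, h]
      have he2 : 2 ≤ e := by omega
      set K' := AddSubgroup.comap (QuotientAddGroup.mk' K) (AddSubgroup.zmultiples w) with hK'
      set m' := K'.index with hm'
      -- index arithmetic : m = m' * e
      have hindex : m' * e = m := by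
        have h1' : K'.index = (AddSubgroup.zmultiples w).index :=
          AddSubgroup.index_comap_of_surjective _ (QuotientAddGroup.mk'_surjective K)
        have h2' : (AddSubgroup.zmultiples w).index * Nat.card (AddSubgroup.zmultiples w)
            = Nat.card (G ⧸ K) := AddSubgroup.index_mul_card _
        have h3' : Nat.card (AddSubgroup.zmultiples w) = e := Nat.card_zmultiples w
        rw [hm', h1']
        rw [h3'] at h2'
        rw [h2']
        exact hcardQ
      have hm'pos : m' ≠ 0 := AddSubgroup.index_ne_zero_of_finite
      have hm'lt : m' < m := by
        rw [← hindex]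
        have : 1 ≤ m' := by omega
        exact (Nat.lt_mul_iff_one_lt_right (by omega)).mpr (by omega)
      set S' := S \ B with hS'
      have hS'card : S'.card = S.card - e := by
        rw [hS', Finset.card_sdiff_of_subset hBS, hBcard]
      have hS'S : S' ⊆ S := Finset.sdiff_subset
      have hS'B : ∀ i ∈ S', i ∉ B := fun i hi => (Finset.mem_sdiff.mp hi).2
      -- membership in K' in terms of natural multiples of w
      have hmemK' : ∀ g : G, g ∈ K' → ∃ c : ℕ, c < e ∧ QuotientAddGroup.mk' K g = c • w := by
        intro g hg
        rw [hK', AddSubgroup.mem_comap] at hg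
        obtain ⟨k, hk⟩ := AddSubgroup.mem_zmultiples_iff.mp hg
        obtain ⟨c, hc, hcw⟩ := zsmul_reduce w hwfin k
        exact ⟨c, hc, by rw [← hk, hcw]⟩
      -- the engine: no subset of S avoiding B can have y-sum c • w with 0 < c < e
      have hengine : ∀ (U : Finset ι), U ⊆ S → (∀ u ∈ U, u ∉ B) → ∀ c : ℕ, c ≠ 0 → c < e →
          (∑ i ∈ U, y i) = c • w → False := by
        intro U hUS hUB c hc0 hce hUsum
        have hle : e - c < B.card := by rw [hBcard]; omega
        apply swap_core x B (e - c) (- ∑ i ∈ U, x i) (by omega) hle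
        intro A hAB hAcard
        have hdisj : Disjoint U A := by
          apply Finset.disjoint_left.mpr
          intro i hiU hiA
          exact hUB i hiU (hAB hiA)
        set T := U ∪ A with hT
        have hTS : T ⊆ S := Finset.union_subset hUS (hAB.trans hBS)
        have hTK : (∑ i ∈ T, x i) ∈ K := by
          rw [hyzero, hT, Finset.sum_union hdisj, hUsum]
          have hAy : (∑ i ∈ A, y i) = (e - c) • w := by
            rw [Finset.sum_congr rfl (fun i hi => hBy i (hAB hi)), Finset.sum_const, hAcard]
          rw [hAy, ← add_nsmul]
          have : c + (e - c) = e := by omega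
          rw [this, he]
          exact addOrderOf_nsmul_eq_zero w
        obtain ⟨hz, hcl⟩ := h1 T hTS hTK
        constructor
        · rw [hT, Finset.sum_union hdisj] at hz
          exact eq_neg_of_add_eq_zero_right hz
        · intro i hiA i' hi'B hxi
          have := hcl i (Finset.mem_union_right _ hiA) i' (hBS hi'B) hxi
          rcases Finset.mem_union.mp this with h | h
          · exact absurd hi'B (hUB i' h)
          · exact h
      -- conditions for the recursion
      have h0'' : ∀ i ∈ S', x i ∉ K' := by
        intro i hiS' hiK'
        obtain ⟨c, hce, hcw⟩ := hmemK' (x i) hiK'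
        rcases Nat.eq_zero_or_pos c with hc0 | hcpos
        · subst hc0
          simp only [zero_nsmul] at hcw
          exact h0 i (hS'S hiS') ((QuotientAddGroup.eq_zero_iff _).mp hcw)
        · apply hengine {i} (Finset.singleton_subset_iff.mpr (hS'S hiS'))
            (fun u hu => by rw [Finset.mem_singleton] at hu; exact hu ▸ hS'B i hiS')
            c (by omega) hce
          rw [Finset.sum_singleton]
          exact hcw
      have h1'' : ∀ J ⊆ S', (∑ i ∈ J, x i) ∈ K' →
          (∑ i ∈ J, x i) = 0 ∧ ∀ i ∈ J, ∀ i' ∈ S', x i' = x i → i' ∈ J := by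
        intro J hJS' hJK'
        have hJS : J ⊆ S := hJS'.trans hS'S
        obtain ⟨c, hce, hcw⟩ := hmemK' _ hJK'
        have hcw' : (∑ i ∈ J, y i) = c • w := by
          rw [hy]
          simp only [← map_sum]
          exact hcw
        rcases Nat.eq_zero_or_pos c with hc0 | hcpos
        · subst hc0
          simp only [zero_nsmul] at hcw'
          have hJK : (∑ i ∈ J, x i) ∈ K := (hyzero J).mpr hcw'
          obtain ⟨hz, hcl⟩ := h1 J hJS hJK
          exact ⟨hz, fun i hiJ i' hi'S' hxi => hcl i hiJ i' (hS'S hi'S') hxi⟩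
        · exfalso
          exact hengine J hJS (fun u hu => hS'B u (hJS' hu)) c (by omega) hce hcw'
      -- apply induction hypothesis
      have hIH := IH m' hm'lt K' rfl S' x h0'' h1''
      -- final arithmetic
      rcases Nat.lt_or_ge m' 2 with hm'1 | hm'2
      · -- m' = 1 : K' = ⊤, so S' is empty
        have hm'eq : m' = 1 := by omega
        have hK'top : K' = ⊤ := AddSubgroup.index_eq_one.mp hm'eq
        have hS'empty : S' = ∅ := by
          by_contra hne
          obtain ⟨i, hi⟩ := Finset.nonempty_iff_ne_empty.mpr hne
          exact h0'' i hi (hK'top ▸ AddSubgroup.mem_top (x i))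
        have : S.card = e := by
          have : S.card = S'.card + B.card := by
            rw [hS', Finset.card_sdiff_of_subset hBS]
            have := Finset.card_le_card hBS
            omega
          rw [hS'empty] at this
          simp at this
          rw [this, hBcard]
        have hme : m = e := by rw [← hindex, hm'eq, one_mul]
        omega
      · -- m' ≥ 2 : arithmetic contradiction
        have hcard_eq : S.card = S'.card + e := by
          rw [hS', Finset.card_sdiff_of_subset hBS]
          have h := Finset.card_le_card hBS
          rw [hBcard]
          have hBe : B.card = e := hBcard
          omega
        nlinarith [hIH, hm'2, he2, hindex, hbig, hcard_eq]
    · -- no-block case: counting gives S.card ≤ m, contradiction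
      -- cap: every coset class has size < addOrderOf of its value
      have hcap : ∀ i₀ ∈ S, (S.filter (fun i => y i = y i₀)).card < addOrderOf (y i₀) := by
        intro i₀ hi₀
        set v := y i₀ with hv
        set C := S.filter (fun i => y i = v) with hCdef
        set e := addOrderOf v with he
        have hCS : C ⊆ S := Finset.filter_subset _ _
        have hCy : ∀ i ∈ C, y i = v := fun i hi => (Finset.mem_filter.mp hi).2
        have hi₀C : i₀ ∈ C := Finset.mem_filter.mpr ⟨hi₀, rfl⟩
        have hepos : 0 < e := (isOfFinAddOrder_of_finite v).addOrderOf_pos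
        by_contra hcon
        push_neg at hcon
        -- hcon : e ≤ C.card
        have hsum_e : ∀ A ⊆ C, A.card = e → (∑ i ∈ A, x i) ∈ K := by
          intro A hAC hAcard
          rw [hyzero]
          rw [Finset.sum_congr rfl (fun i hi => hCy i (hAC hi)), Finset.sum_const, hAcard]
          exact addOrderOf_nsmul_eq_zero v
        rcases lt_or_eq_of_le hcon with hlt | heq
        · -- e < C.card : swap_core contradiction
          apply swap_core x C e 0 hepos hlt
          intro A hAC hAcard
          obtain ⟨hz, hcl⟩ := h1 A (hAC.trans hCS) (hsum_e A hAC hAcard)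
          refine ⟨hz, fun i hiA i' hi'C hxi => ?_⟩
          exact hcl i hiA i' (hCS hi'C) hxi
        · -- e = C.card : C is a block
          apply hB
          obtain ⟨hz, hcl⟩ := h1 C hCS (hsum_e C (Finset.Subset.refl C) heq.symm)
          exact ⟨i₀, hi₀, C, hCS, hi₀C, hCy, heq.symm, hz, hcl⟩
      -- nonempty S and representatives
      have hmne : m ≠ 0 := by
        rw [← hK]; exact AddSubgroup.index_ne_zero_of_finite
      have hSne : S.Nonempty := Finset.card_pos.mp (by omega)
      haveI : Nonempty ι := ⟨hSne.choose⟩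
      set V := S.image y with hV
      have hrep : ∀ v ∈ V, ∃ i ∈ S, y i = v := by
        intro v hv
        obtain ⟨i, hi, hyi⟩ := Finset.mem_image.mp hv
        exact ⟨i, hi, hyi⟩
      set rep : G ⧸ K → ι := fun v => if h : ∃ i ∈ S, y i = v then h.choose else hSne.choose
        with hrepdef
      have hrepS : ∀ v ∈ V, rep v ∈ S ∧ y (rep v) = v := by
        intro v hv
        have h := hrep v hv
        rw [hrepdef]
        simp only [dif_pos h]
        exact ⟨h.choose_spec.1, h.choose_spec.2⟩
      set R := V.image rep with hR
      have hRS : R ⊆ S := by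
        intro i hi
        obtain ⟨v, hv, hrv⟩ := Finset.mem_image.mp hi
        exact hrv ▸ (hrepS v hv).1
      have hcardR : R.card = V.card := by
        rw [hR]
        apply Finset.card_image_of_injOn
        intro u hu v hv huv
        rw [← (hrepS u hu).2, ← (hrepS v hv).2, huv]
      set F := S \ R with hF
      have hcardF : F.card = S.card - V.card := by
        rw [hF, Finset.card_sdiff_of_subset hRS, hcardR]
      have hVcard_le : V.card ≤ S.card := Finset.card_image_le
      -- F is zero-sum free in the quotient
      have hzsf : ∀ J ⊆ F, J.Nonempty → (∑ i ∈ J, y i) ≠ 0 := by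
        intro J hJF hJne hcon
        have hJS : J ⊆ S := hJF.trans (Finset.sdiff_subset)
        have hJK : (∑ i ∈ J, x i) ∈ K := (hyzero J).mpr hcon
        obtain ⟨i, hiJ⟩ := hJne
        rcases swap J hJS hJK (y i) with h | h
        · exact h i hiJ rfl
        · have hyiV : y i ∈ V := Finset.mem_image_of_mem y (hJS hiJ)
          have : rep (y i) ∈ J := h (rep (y i)) (hrepS _ hyiV).1 (hrepS _ hyiV).2
          have : rep (y i) ∈ F := hJF this
          rw [hF] at this
          exact (Finset.mem_sdiff.mp this).2 (Finset.mem_image_of_mem rep hyiV)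
      -- Olson bound
      set sums := F.powerset.image (fun J => ∑ i ∈ J, y i) with hsums
      have holson : F.card + 1 ≤ sums.card := olson y F hzsf
      -- avoid set
      have havoid : ∀ v ∈ V, -v ∉ sums := by
        intro v hv hmem
        obtain ⟨J, hJpow, hJsum⟩ := Finset.mem_image.mp hmem
        have hJF : J ⊆ F := Finset.mem_powerset.mp hJpow
        have hJS : J ⊆ S := hJF.trans Finset.sdiff_subset
        have hrvJ : rep v ∉ J := by
          intro h
          have := hJF h
          rw [hF] at this
          exact (Finset.mem_sdiff.mp this).2 (Finset.mem_image_of_mem rep hv)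
        set T := insert (rep v) J with hT
        have hTS : T ⊆ S := Finset.insert_subset (hrepS v hv).1 hJS
        have hTK : (∑ i ∈ T, x i) ∈ K := by
          rw [hyzero, hT, Finset.sum_insert hrvJ, (hrepS v hv).2, hJsum]
          abel
        -- every element of T has y-value v
        have hclaim1 : ∀ i ∈ T, y i = v := by
          intro i hiT
          by_contra hne
          rcases swap T hTS hTK (y i) with h | h
          · exact h i hiT rfl
          · have hyiV : y i ∈ V := Finset.mem_image_of_mem y (hTS hiT)
            have hrT : rep (y i) ∈ T := h (rep (y i)) (hrepS _ hyiV).1 (hrepS _ hyiV).2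
            rw [hT] at hrT
            rcases Finset.mem_insert.mp hrT with h' | h'
            · apply hne
              rw [← (hrepS _ hyiV).2, h', (hrepS v hv).2]
            · have := hJF h'
              rw [hF] at this
              exact (Finset.mem_sdiff.mp this).2 (Finset.mem_image_of_mem rep hyiV)
        -- T contains the full coset class of v
        have hclaim2 : ∀ i ∈ S, y i = v → i ∈ T := by
          intro i hiS hyi
          rcases swap T hTS hTK v with h | h
          · exact absurd ((hrepS v hv).2) (h (rep v) (Finset.mem_insert_self _ _))
          · exact h i hiS hyi
        have hTeq : T = S.filter (fun i => y i = v) := by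
          apply Finset.Subset.antisymm
          · intro i hi
            exact Finset.mem_filter.mpr ⟨hTS hi, hclaim1 i hi⟩
          · intro i hi
            exact hclaim2 i (Finset.mem_filter.mp hi).1 (Finset.mem_filter.mp hi).2
        -- sum of y over T is |T| • v = 0, so ord v ∣ |T|, contradiction with cap
        have hsumT : (∑ i ∈ T, y i) = T.card • v := by
          rw [Finset.sum_congr rfl hclaim1, Finset.sum_const]
        have hsum0 : (∑ i ∈ T, y i) = 0 := (hyzero T).mp hTK
        have hdvd : addOrderOf v ∣ T.card :=
          addOrderOf_dvd_of_nsmul_eq_zero (by rw [← hsumT]; exact hsum0)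
        have hTpos : 0 < T.card :=
          Finset.card_pos.mpr ⟨rep v, Finset.mem_insert_self _ _⟩
        have hcapT := hcap (rep v) (hrepS v hv).1
        rw [(hrepS v hv).2, ← hTeq] at hcapT
        exact absurd (Nat.le_of_dvd hTpos hdvd) (not_le.mpr hcapT)
      -- final count
      set avoidF := V.image (fun v => -v) with havoidF
      have hcardAvoid : avoidF.card = V.card := by
        rw [havoidF]
        apply Finset.card_image_of_injOn
        intro u _ v _ h
        exact neg_injective h
      have hdisj : Disjoint sums avoidF := by
        rw [Finset.disjoint_right]
        intro w hw hws
        obtain ⟨v, hv, hvw⟩ := Finset.mem_image.mp hw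
        exact havoid v hv (hvw ▸ hws)
      have hunion : (sums ∪ avoidF).card = sums.card + avoidF.card :=
        Finset.card_union_of_disjoint hdisj
      haveI : Fintype (G ⧸ K) := Fintype.ofFinite _
      have hbound : (sums ∪ avoidF).card ≤ m := by
        calc (sums ∪ avoidF).card ≤ Fintype.card (G ⧸ K) := Finset.card_le_univ _
        _ = Nat.card (G ⧸ K) := (Nat.card_eq_fintype_card).symm
        _ = m := hcardQ
      rw [hunion, hcardAvoid] at hbound
      omega
/-- For `p ≥ 2` and a sequence of `t ≥ p+1` nonzero elements of `ℤ/pℤ`, there is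
a pair of distinct indices `k₁ ≠ k₂` with `x k₁ = x k₂` and a subset of the remaining indices
whose sum together with `x k₁` is zero. -/
theorem exists_pair_and_zero_sum_subset
    {p t : ℕ} (hp : 2 ≤ p) (ht : p + 1 ≤ t)
    (x : Fin t → ZMod p) (hx : ∀ i, x i ≠ 0) :
    ∃ k₁ k₂ : Fin t, k₁ ≠ k₂ ∧ x k₁ = x k₂ ∧
      ∃ I : Finset (Fin t), k₁ ∉ I ∧ k₂ ∉ I ∧ x k₁ + ∑ i ∈ I, x i = 0 := by
  classical
  haveI : NeZero p := ⟨by omega⟩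
  by_contra hcon
  push_neg at hcon
  -- every zero-sum subset is closed under taking all indices with the same value
  have h1 : ∀ J ⊆ (Finset.univ : Finset (Fin t)), (∑ i ∈ J, x i) ∈ (⊥ : AddSubgroup (ZMod p)) →
      (∑ i ∈ J, x i) = 0 ∧ ∀ i ∈ J, ∀ i' ∈ (Finset.univ : Finset (Fin t)), x i' = x i → i' ∈ J := by
    intro J _ hJ
    have hz : (∑ i ∈ J, x i) = 0 := by simpa using hJ
    refine ⟨hz, ?_⟩
    intro i hiJ i' _ hxi
    by_contra hi'J
    have hne : i ≠ i' := fun h => hi'J (h ▸ hiJ)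
    have := hcon i i' hne hxi.symm (J.erase i)
    rcases this (Finset.notMem_erase i J) (fun h => hi'J (Finset.mem_of_mem_erase h)) with h
    apply h
    rw [Finset.add_sum_erase J x hiJ]
    exact hz
  have h0 : ∀ i ∈ (Finset.univ : Finset (Fin t)), x i ∉ (⊥ : AddSubgroup (ZMod p)) := by
    intro i _ h
    exact hx i (by simpa using h)
  have hidx : (⊥ : AddSubgroup (ZMod p)).index = p := by
    rw [AddSubgroup.index_bot]
    rw [Nat.card_eq_fintype_card, ZMod.card]
  have := key p ⊥ hidx Finset.univ x h0 h1
  rw [Finset.card_univ, Fintype.card_fin] at this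
  omega
end

section
/- Let p be a prime and let x_1,…,x_t be a sequence of t ≥ p+1 nonzero elements of ℤ/pℤ. Then for every pair of indices k_1, k_2 ∈ {1,…,t} with k_1 ≠ k_2 and x_{k_1} = x_{k_2}, there exists a subset of indices {i_1,…,i_r} ⊆ {1,…,t} \ {k_1,k_2} such that x_{k_1} + x_{i_1} + … + x_{i_r} = 0 in ℤ/pℤ. -/
open Finset

lemma closed_is_univ {p : ℕ} [Fact p.Prime] (T : Finset (ZMod p)) (g : ZMod p)
    (hg : g ≠ 0) (h0 : (0 : ZMod p) ∈ T) (hcl : ∀ s ∈ T, s + g ∈ T) :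
    T = Finset.univ := by
  have hn : ∀ n : ℕ, (n : ZMod p) * g ∈ T := by
    intro n
    induction n with
    | zero => simpa using h0
    | succ n ih =>
      have h : ((n + 1 : ℕ) : ZMod p) * g = (n : ZMod p) * g + g := by push_cast; ring
      rw [h]
      exact hcl _ ih
  apply Finset.eq_univ_of_forall
  intro c
  have := hn (c * g⁻¹).val
  rwa [ZMod.natCast_val, ZMod.cast_id, mul_assoc, inv_mul_cancel₀ hg, mul_one] at this

lemma card_subset_sums {p : ℕ} [Fact p.Prime] {ι : Type*} [DecidableEq ι]
    (f : ι → ZMod p) :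
    ∀ S : Finset ι, (∀ i ∈ S, f i ≠ 0) →
      min p (S.card + 1) ≤ (S.powerset.image (fun I => ∑ i ∈ I, f i)).card := by
  intro S
  induction S using Finset.induction_on with
  | empty =>
    intro _
    simp only [Finset.powerset_empty, Finset.image_singleton, Finset.card_singleton,
      Finset.card_empty]
    omega
  | @insert a S ha ih =>
    intro hf
    have hfa : f a ≠ 0 := hf a (Finset.mem_insert_self a S)
    have ihS := ih (fun i hi => hf i (Finset.mem_insert_of_mem hi))
    set T := S.powerset.image (fun I => ∑ i ∈ I, f i) with hT
    have h0T : (0 : ZMod p) ∈ T := by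
      refine Finset.mem_image.2 ⟨∅, by simp, by simp⟩
    have hdecomp : (insert a S).powerset.image (fun I => ∑ i ∈ I, f i)
        = T ∪ T.image (fun s => s + f a) := by
      rw [Finset.powerset_insert, Finset.image_union, Finset.image_image]
      congr 1
      rw [hT, Finset.image_image]
      apply Finset.image_congr
      intro I hI
      simp only [Finset.mem_coe, Finset.mem_powerset] at hI
      have haI : a ∉ I := fun h => ha (hI h)
      simp [Function.comp, Finset.sum_insert haI, add_comm]
    rw [hdecomp]
    by_cases hcl : T.image (fun s => s + f a) ⊆ T
    · have : T = Finset.univ := by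
        apply closed_is_univ T (f a) hfa h0T
        intro s hs
        exact hcl (Finset.mem_image_of_mem _ hs)
      have : p ≤ (T ∪ T.image (fun s => s + f a)).card := by
        calc p = T.card := by rw [this, Finset.card_univ, ZMod.card]
        _ ≤ _ := Finset.card_le_card Finset.subset_union_left
      omega
    · obtain ⟨y, hy, hynT⟩ := Finset.not_subset.1 hcl
      have h1 : insert y T ⊆ T ∪ T.image (fun s => s + f a) :=
        Finset.insert_subset (Finset.mem_union_right _ hy)
          Finset.subset_union_left
      have := Finset.card_le_card h1
      rw [Finset.card_insert_of_notMem hynT] at this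
      have hc : (insert a S).card = S.card + 1 := Finset.card_insert_of_notMem ha
      omega

lemma subset_sums_cover {p : ℕ} (hp : p.Prime) {ι : Type*} [DecidableEq ι]
    (f : ι → ZMod p) (S : Finset ι) (hf : ∀ i ∈ S, f i ≠ 0)
    (hcard : p ≤ S.card + 1) (c : ZMod p) :
    ∃ I ⊆ S, ∑ i ∈ I, f i = c := by
  haveI : Fact p.Prime := ⟨hp⟩
  have h := card_subset_sums f S hf
  rw [min_eq_left hcard] at h
  have huniv : S.powerset.image (fun I => ∑ i ∈ I, f i) = Finset.univ := by
    apply Finset.eq_univ_of_card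
    have hle : (S.powerset.image (fun I => ∑ i ∈ I, f i)).card ≤ p := by
      simpa [ZMod.card] using Finset.card_le_univ (S.powerset.image (fun I => ∑ i ∈ I, f i))
    rw [ZMod.card]; omega
  have : c ∈ S.powerset.image (fun I => ∑ i ∈ I, f i) := huniv ▸ Finset.mem_univ c
  obtain ⟨I, hI, hsum⟩ := Finset.mem_image.1 this
  exact ⟨I, Finset.mem_powerset.1 hI, hsum⟩


/-- For `p` prime and a sequence of `t ≥ p+1` nonzero elements of `ℤ/pℤ`, every
pair of distinct indices `k₁ ≠ k₂` with `x k₁ = x k₂` admits a subset of the remaining indices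
whose sum together with `x k₁` is zero. -/
theorem every_pair_admits_zero_sum_subset
    {p t : ℕ} (hp : p.Prime) (ht : p + 1 ≤ t)
    (x : Fin t → ZMod p) (hx : ∀ i, x i ≠ 0)
    (k₁ k₂ : Fin t) (hk : k₁ ≠ k₂) (hxk : x k₁ = x k₂) :
    ∃ I : Finset (Fin t), k₁ ∉ I ∧ k₂ ∉ I ∧ x k₁ + ∑ i ∈ I, x i = 0 := by
  set S : Finset (Fin t) := Finset.univ \ {k₁, k₂} with hS
  have hcard : S.card = t - 2 := by
    rw [hS, Finset.card_sdiff_of_subset (by simp), Finset.card_univ, Fintype.card_fin]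
    rw [Finset.card_pair hk]
  obtain ⟨I, hIS, hsum⟩ := subset_sums_cover hp x S (fun i _ => hx i)
    (by omega) (-(x k₁))
  refine ⟨I, ?_, ?_, by rw [hsum]; ring⟩
  · intro h; have := hIS h; simp [hS] at this
  · intro h; have := hIS h; simp [hS] at this
end

section
/- Let p be an odd prime. For every ρ-invariant monomial m of R and every monomial order on R, the polynomial m + σ(m) reduces to zero modulo the set 𝒢. -/
open MvPolynomial

noncomputable section

abbrev DVar (r s : ℕ) := (Fin r ⊕ Fin r) ⊕ (Fin s ⊕ Fin s)

def dswap {r s : ℕ} : DVar r s → DVar r s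
  | .inl (.inl i) => .inl (.inr i)
  | .inl (.inr i) => .inl (.inl i)
  | .inr (.inl j) => .inr (.inr j)
  | .inr (.inr j) => .inr (.inl j)

def sigmaMap (F : Type*) [Field F] (r s : ℕ) :
    MvPolynomial (DVar r s) F →ₐ[F] MvPolynomial (DVar r s) F :=
  MvPolynomial.rename dswap

def rhoCoeff {F : Type*} [Field F] {r s : ℕ} (lam : Fin r → F) : DVar r s → F
  | .inl (.inl i) => lam i
  | .inl (.inr i) => (lam i)⁻¹
  | .inr _ => 1

def rhoMap (F : Type*) [Field F] (r s : ℕ) (lam : Fin r → F) :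
    MvPolynomial (DVar r s) F →ₐ[F] MvPolynomial (DVar r s) F :=
  MvPolynomial.aeval fun v => MvPolynomial.C (rhoCoeff lam v) * MvPolynomial.X v

def HilbertIdeal (F : Type*) [Field F] (r s : ℕ) (lam : Fin r → F) :
    Ideal (MvPolynomial (DVar r s) F) :=
  Ideal.span {f | sigmaMap F r s f = f ∧ rhoMap F r s lam f = f ∧ constantCoeff f = 0}

def IsMonomial {σ F : Type*} [CommSemiring F] (f : MvPolynomial σ F) : Prop :=
  ∃ d : σ →₀ ℕ, f = monomial d 1

def GSet (F : Type*) [Field F] (r s p : ℕ) (lam : Fin r → F) :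
    Set (MvPolynomial (DVar r s) F) :=
  {f | ∃ m, IsMonomial m ∧ rhoMap F r s lam m = m ∧ sigmaMap F r s m ≠ m ∧
      m.totalDegree ≤ p ∧ f = m + sigmaMap F r s m} ∪
  {f | ∃ (m : MvPolynomial (DVar r s) F) (v : DVar r s), IsMonomial m ∧ rhoMap F r s lam m = m ∧ m.totalDegree ≤ p ∧
      X v ∣ m ∧ f = X v * m} ∪
  {f | (∃ i : Fin r, f = X (Sum.inl (Sum.inl i)) * X (Sum.inl (Sum.inr i))) ∨
       (∃ j : Fin s, f = X (Sum.inr (Sum.inl j)) * X (Sum.inr (Sum.inr j)))}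

def lmExp {σ F : Type*} [CommSemiring F] (mo : MonomialOrder σ) (f : MvPolynomial σ F) :
    σ →₀ ℕ :=
  mo.toSyn.symm (f.support.sup fun d => mo.toSyn d)

/-- `f` reduces to zero modulo `G` with respect to the monomial order `mo`. -/
def ReducesToZero {σ F : Type*} [CommSemiring F] (mo : MonomialOrder σ)
    (G : Set (MvPolynomial σ F)) (f : MvPolynomial σ F) : Prop :=
  ∃ (n : ℕ) (a g : Fin n → MvPolynomial σ F),
    (∀ i, g i ∈ G) ∧ f = ∑ i, a i * g i ∧
    ∀ i, a i * g i ≠ 0 → mo.toSyn (lmExp mo (a i * g i)) ≤ mo.toSyn (lmExp mo f)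

/-!
Write `m = X^d`. The generator `ρ` scales each variable by a `p`-th root of unity, so the
`p + 1` partial products of these scalars along any enumeration of the variables of `X^d`
(with multiplicity) cannot all differ: once `deg d ≥ p`, `X^d` has a `ρ`-invariant divisor
`X^d₁` with `1 ≤ deg d₁ ≤ p`, and `X^d₂ = X^d / X^d₁` is `ρ`-invariant as well. In
characteristic two
  `X^d + σ X^d = X^d₂ (X^d₁ + σ X^d₁) + σ X^d₁ (X^d₂ + σ X^d₂)`,
and after possibly exchanging `d₂` with `σ d₂` both summands have leading monomial at most that of
the left-hand side, so reductions of the two smaller orbit sums combine. Induction on the degree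
ends at degree `≤ p`, where `X^d + σ X^d` is zero or an element of `𝒢`.
-/

open scoped MonomialOrder

section Reduction

variable {σ R : Type*} [CommSemiring R] {mo : MonomialOrder σ}

theorem lmExp_eq_degree (f : MvPolynomial σ R) : lmExp mo f = mo.degree f := rfl

namespace ReducesToZero

variable {G : Set (MvPolynomial σ R)}

theorem zero : ReducesToZero mo G 0 :=
  ⟨0, Fin.elim0, Fin.elim0, fun i => i.elim0, by simp, fun i => i.elim0⟩

theorem of_mem {f : MvPolynomial σ R} (hf : f ∈ G) : ReducesToZero mo G f :=
  ⟨1, fun _ => 1, fun _ => f, fun _ => hf, by simp, fun _ _ => by rw [one_mul]⟩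

theorem add {f₁ f₂ : MvPolynomial σ R}
    (h₁ : ReducesToZero mo G f₁) (h₂ : ReducesToZero mo G f₂)
    (hle₁ : mo.degree f₁ ≼[mo] mo.degree (f₁ + f₂))
    (hle₂ : mo.degree f₂ ≼[mo] mo.degree (f₁ + f₂)) :
    ReducesToZero mo G (f₁ + f₂) := by
  obtain ⟨n₁, a₁, g₁, hg₁, rfl, hb₁⟩ := h₁
  obtain ⟨n₂, a₂, g₂, hg₂, rfl, hb₂⟩ := h₂
  refine ⟨n₁ + n₂, Fin.append a₁ a₂, Fin.append g₁ g₂, fun i => ?_, by simp [Fin.sum_univ_add],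
    fun i => ?_⟩
  · induction i using Fin.addCases <;> simp [hg₁, hg₂]
  · induction i using Fin.addCases with
    | left i =>
      simp only [Fin.append_left]
      exact fun hi => (hb₁ i hi).trans hle₁
    | right i =>
      simp only [Fin.append_right]
      exact fun hi => (hb₂ i hi).trans hle₂

theorem mul_left [NoZeroDivisors R] {f : MvPolynomial σ R}
    (h : ReducesToZero mo G f) (q : MvPolynomial σ R) : ReducesToZero mo G (q * f) := by
  -- `lmExp 0 = 0`, so a representation of `0` need not survive multiplication by `q`
  rcases eq_or_ne f 0 with rfl | hf
  · rw [mul_zero]; exact zero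
  obtain ⟨n, a, g, hg, rfl, hb⟩ := h
  refine ⟨n, fun i => q * a i, g, hg, by simp [Finset.mul_sum, mul_assoc], fun i hi => ?_⟩
  rw [mul_assoc] at hi ⊢
  obtain ⟨hq, hag⟩ := mul_ne_zero_iff.mp hi
  simp only [lmExp_eq_degree] at hb ⊢
  rw [mo.degree_mul hq hag, mo.degree_mul hq hf, map_add, map_add]
  exact add_le_add_right (hb i hag) _

end ReducesToZero

end Reduction

section CharTwo

variable {σ R : Type*} [CommRing R] {mo : MonomialOrder σ}

theorem MonomialOrder.degree_monomial_add_monomial_le {a b d : σ →₀ ℕ} (c c' : R)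
    (ha : a ≼[mo] d) (hb : b ≼[mo] d) : mo.degree (monomial a c + monomial b c') ≼[mo] d :=
  mo.degree_add_le.trans
    (max_le ((mo.degree_monomial_le c).trans ha) ((mo.degree_monomial_le c').trans hb))

theorem MvPolynomial.support_monomial_one_add_monomial_one [DecidableEq σ] [Nontrivial R]
    {a b : σ →₀ ℕ} (hab : a ≠ b) : (monomial a (1 : R) + monomial b 1).support = {a, b} := by
  ext x
  by_cases hxa : x = a <;> by_cases hxb : x = b <;> simp_all [coeff_monomial, eq_comm]

variable [IsDomain R] [CharP R 2] {G : Set (MvPolynomial σ R)}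

theorem ReducesToZero.monomial_add_monomial_add {d₁ d₁' d₂ d₂' : σ →₀ ℕ}
    (h₁ : ReducesToZero mo G (monomial d₁ 1 + monomial d₁' 1))
    (h₂ : ReducesToZero mo G (monomial d₂ 1 + monomial d₂' 1))
    (hne : d₁ + d₂ ≠ d₁' + d₂') :
    ReducesToZero mo G (monomial (d₁ + d₂) 1 + monomial (d₁' + d₂') 1) := by
  classical
  wlog hle : d₂ ≼[mo] d₂' generalizing d₁ d₁' d₂ d₂'
  · rw [add_comm]
    exact this (by rwa [add_comm]) (by rwa [add_comm]) hne.symm (le_of_not_ge hle)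
  -- the two cross terms `X^(d₁' + d₂)` cancel in characteristic two
  have key : monomial (d₁ + d₂) (1 : R) + monomial (d₁' + d₂') 1 =
      monomial d₂ 1 * (monomial d₁ 1 + monomial d₁' 1) +
        monomial d₁' 1 * (monomial d₂ 1 + monomial d₂' 1) := by
    have hcancel := CharTwo.add_self_eq_zero (monomial (d₁' + d₂) (1 : R))
    simp only [mul_add, monomial_mul, one_mul]
    rw [add_comm d₂ d₁, add_comm d₂ d₁']
    linear_combination -hcancel
  have hsupp := support_monomial_one_add_monomial_one (R := R) hne
  have hfirst := mo.le_degree (hsupp ▸ Finset.mem_insert_self _ _)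
  have hlast := mo.le_degree (hsupp ▸ Finset.mem_insert_of_mem (Finset.mem_singleton_self _))
  have hcross : d₁' + d₂ ≼[mo] d₁' + d₂' := by
    simpa only [map_add] using add_le_add_right hle (mo.toSyn d₁')
  rw [key]
  refine (h₁.mul_left _).add (h₂.mul_left _) ?_ ?_ <;> rw [← key, mul_add, monomial_mul,
    monomial_mul, one_mul]
  · rw [add_comm d₂ d₁, add_comm d₂ d₁']
    exact mo.degree_monomial_add_monomial_le _ _ hfirst (hcross.trans hlast)
  · exact mo.degree_monomial_add_monomial_le _ _ (hcross.trans hlast) hlast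

end CharTwo

theorem List.exists_infix_prod_map_eq_one {α K : Type*} [CommRing K] [IsDomain K] {p : ℕ}
    (hp : 0 < p) (c : α → K) {l : List α} (hc : ∀ a ∈ l, c a ^ p = 1) (hl : p ≤ l.length) :
    ∃ t, t <:+: l ∧ 0 < t.length ∧ t.length ≤ p ∧ (t.map c).prod = 1 := by
  classical
  set f : ℕ → K := fun k => ((l.take k).map c).prod with hf
  have hroot : ∀ k, f k ^ p = 1 := fun k => by
    rw [hf, ← powMonoidHom_apply, map_list_prod, List.map_map]
    exact List.prod_eq_one fun x hx => by
      obtain ⟨a, ha, rfl⟩ := List.mem_map.1 hx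
      exact hc a (List.mem_of_mem_take ha)
  -- the `p + 1` prefix products are `p`-th roots of unity, of which there are at most `p`
  obtain ⟨i, hi, j, hj, hij, hfij⟩ := Finset.exists_ne_map_eq_of_card_lt_of_maps_to
    (t := (Polynomial.nthRoots p (1 : K)).toFinset) (s := Finset.range (p + 1))
    ((Multiset.toFinset_card_le _).trans_lt
      ((Polynomial.card_nthRoots p 1).trans_lt (by simp)))
    (f := f) fun k _ => by simp [Polynomial.mem_nthRoots hp, hroot]
  wlog hlt : i < j generalizing i j
  · exact this j hj i hi hij.symm hfij.symm (by omega)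
  rw [Finset.mem_range] at hi hj
  have hlen : ((l.drop i).take (j - i)).length = j - i := by
    simp only [length_take, length_drop]; omega
  refine ⟨(l.drop i).take (j - i), (take_prefix _ _).isInfix.trans (drop_suffix _ _).isInfix,
    by omega, by omega, ?_⟩
  have hfi : f i ≠ 0 := fun h => by simpa [h, hp.ne'] using hroot i
  have hsplit : f j = f i * (((l.drop i).take (j - i)).map c).prod := by
    rw [hf, ← List.prod_append, ← List.map_append, ← List.take_add, Nat.add_sub_cancel' hlt.le]
  exact (mul_eq_left₀ hfi).1 (hsplit ▸ hfij).symm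

section ExpWeight

variable {σ : Type*}

def expWeight {M : Type*} [CommMonoid M] (c : σ → M) (d : σ →₀ ℕ) : M :=
  d.prod fun v n => c v ^ n

theorem expWeight_add {M : Type*} [CommMonoid M] (c : σ → M) (d e : σ →₀ ℕ) :
    expWeight c (d + e) = expWeight c d * expWeight c e :=
  Finsupp.prod_add_index' (fun _ => pow_zero _) fun _ _ _ => pow_add _ _ _

theorem expWeight_eq_prod_map_toMultiset {M : Type*} [CommMonoid M] (c : σ → M)
    (d : σ →₀ ℕ) : expWeight c d = ((Finsupp.toMultiset d).map c).prod := by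
  rw [Finsupp.toMultiset_map, Finsupp.prod_toMultiset,
    Finsupp.prod_mapDomain_index (fun _ => pow_zero _) fun _ _ _ => pow_add _ _ _]
  rfl

variable {K : Type*} [CommRing K] [IsDomain K] {p : ℕ}

theorem Finsupp.exists_le_degree_le_expWeight_eq_one (hp : 0 < p) {c : σ → K}
    (hc : ∀ v, c v ^ p = 1) {d : σ →₀ ℕ} (hd : p ≤ d.degree) :
    ∃ d₁ ≤ d, 0 < d₁.degree ∧ d₁.degree ≤ p ∧ expWeight c d₁ = 1 := by
  classical
  have hcard (e : σ →₀ ℕ) : e.degree = Multiset.card (toMultiset e) := (card_toMultiset e).symm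
  obtain ⟨t, ht, hpos, hle, hprod⟩ := List.exists_infix_prod_map_eq_one hp c
    (l := (toMultiset d).toList) (fun a _ => hc a) (by rwa [Multiset.length_toList, ← hcard])
  refine ⟨Multiset.toFinsupp t, ?_, by simpa [hcard], by simpa [hcard], ?_⟩
  · rw [← orderIsoMultiset.le_iff_le]
    simpa using Multiset.coe_le.2 ht.sublist.subperm
  · simpa [expWeight_eq_prod_map_toMultiset]

theorem reducesToZero_monomial_add_monomial_of_expWeight_eq_one [CharP K 2]
    (mo : MonomialOrder σ) {G : Set (MvPolynomial σ K)} (τ : (σ →₀ ℕ) →+ (σ →₀ ℕ))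
    {c : σ → K} (hp : 0 < p) (hc : ∀ v, c v ^ p = 1)
    (hG : ∀ d, expWeight c d = 1 → τ d ≠ d → d.degree ≤ p →
      monomial d 1 + monomial (τ d) 1 ∈ G)
    (d : σ →₀ ℕ) (hd : expWeight c d = 1) :
    ReducesToZero mo G (monomial d 1 + monomial (τ d) 1) := by
  induction hn : d.degree using Nat.strong_induction_on generalizing d with
  | _ n ih =>
    by_cases hfix : τ d = d
    · rw [hfix, CharTwo.add_self_eq_zero]
      exact .zero
    by_cases hdeg : d.degree ≤ p
    · exact .of_mem (hG d hd hfix hdeg)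
    obtain ⟨d₁, hle, hpos, hd₁p, hd₁⟩ :=
      Finsupp.exists_le_degree_le_expWeight_eq_one hp hc (le_of_not_ge hdeg)
    obtain ⟨d₂, rfl⟩ := exists_add_of_le hle
    have hd₂ : expWeight c d₂ = 1 := by simpa [expWeight_add, hd₁] using hd
    have hdeg_add := map_add Finsupp.degree d₁ d₂
    rw [map_add τ]
    exact (ih _ (by omega) d₁ hd₁ rfl).monomial_add_monomial_add (ih _ (by omega) d₂ hd₂ rfl)
      (by rwa [← map_add τ, ne_comm])

end ExpWeight

section Dihedral

variable {F : Type*} [Field F] {r s : ℕ}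

theorem sigmaMap_monomial (d : DVar r s →₀ ℕ) (c : F) :
    sigmaMap F r s (monomial d c) = monomial (d.mapDomain dswap) c :=
  rename_monomial _ _ _

variable (lam : Fin r → F)

theorem rhoMap_monomial (d : DVar r s →₀ ℕ) (c : F) :
    rhoMap F r s lam (monomial d c) = monomial d (c * expWeight (rhoCoeff lam) d) := by
  rw [rhoMap, aeval_monomial, algebraMap_eq, monomial_eq]
  simp only [expWeight, Finsupp.prod, mul_pow, Finset.prod_mul_distrib, map_mul, map_prod,
    map_pow]
  ring

theorem rhoMap_monomial_one_eq_self_iff (d : DVar r s →₀ ℕ) :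
    rhoMap F r s lam (monomial d 1) = monomial d 1 ↔ expWeight (rhoCoeff lam) d = 1 := by
  rw [rhoMap_monomial, monomial_eq_monomial_iff]
  simp

theorem rhoCoeff_pow_eq_one {p : ℕ} (hlam : ∀ i, lam i ^ p = 1) (v : DVar r s) :
    rhoCoeff lam v ^ p = 1 := by
  rcases v with (i | i) | _ <;> simp [rhoCoeff, hlam]

end Dihedral

theorem orbitSum_reducesToZero_GSet_general
    {F : Type*} [Field F] [CharP F 2] {r s p : ℕ} (hp : p.Prime)
    (lam : Fin r → F) (hlam : ∀ i, lam i ^ p = 1 ∧ lam i ≠ 1)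
    (mo : MonomialOrder (DVar r s))
    (m : MvPolynomial (DVar r s) F) (hm : IsMonomial m) (hρ : rhoMap F r s lam m = m) :
    ReducesToZero mo (GSet F r s p lam) (m + sigmaMap F r s m) := by
  obtain ⟨d, rfl⟩ := hm
  rw [sigmaMap_monomial]
  refine reducesToZero_monomial_add_monomial_of_expWeight_eq_one mo
    (Finsupp.mapDomain.addMonoidHom dswap) hp.pos (rhoCoeff_pow_eq_one lam fun i => (hlam i).1)
    (fun e he hfix hdeg => ?_) d ((rhoMap_monomial_one_eq_self_iff lam d).1 hρ)
  refine Or.inl (Or.inl ⟨monomial e 1, ⟨e, rfl⟩, (rhoMap_monomial_one_eq_self_iff lam e).2 he,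
    ?_, ?_, by rw [sigmaMap_monomial]; rfl⟩)
  · rw [sigmaMap_monomial]
    exact (monomial_left_injective one_ne_zero).ne hfix
  · rwa [totalDegree_monomial _ one_ne_zero]

/-- For `p` an odd prime, every `ρ`-invariant monomial `m` and every monomial
order, the polynomial `m + σ(m)` reduces to zero modulo the set `𝒢`. -/
theorem orbitSum_reducesToZero_GSet
    {F : Type*} [Field F] [CharP F 2] {r s p : ℕ} (hp : p.Prime) (hodd : Odd p)
    (ζ : F) (hζ : IsPrimitiveRoot ζ p)
    (lam : Fin r → F) (hlam : ∀ i, lam i ^ p = 1 ∧ lam i ≠ 1)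
    (mo : MonomialOrder (DVar r s))
    (m : MvPolynomial (DVar r s) F) (hm : IsMonomial m) (hρ : rhoMap F r s lam m = m) :
    ReducesToZero mo (GSet F r s p lam) (m + sigmaMap F r s m) :=
  orbitSum_reducesToZero_GSet_general hp lam hlam mo m hm hρ
end
end

section
/- Let p be an odd prime. The monomial y_1·y_2·…·y_r·w_1·w_2·…·w_s does not lie in the Hilbert ideal I_H; consequently the top degree of the coinvariant ring R/I_H is at least r + s. -/
open MvPolynomial

noncomputable section

/-!
Let `psi` send `x_i ↦ λ_i t_i`, `y_i ↦ t_i` and `z_j, w_j ↦ u_j`, so that `psi ∘ σ ∘ ρ = psi`.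
Every monomial `m` of a `ρ`-invariant polynomial is itself `ρ`-invariant, so `psi (σ m) = psi m`;
as a `σ`-invariant `f` has equal coefficients on `m` and `σ m`, these two terms cancel in
characteristic two. A `σ`-fixed nonconstant monomial is divisible by some `x_i y_i` or `z_j w_j`,
so its image lies in the ideal generated by the squares of the variables. Hence `psi` maps the
Hilbert ideal into that ideal, which does not contain `psi (y₁⋯y_r w₁⋯w_s) = t₁⋯t_r u₁⋯u_s`.
-/

namespace MvPolynomial

variable {σ R : Type*} [CommSemiring R]

theorem aeval_C_mul_X_monomial (c : σ → R) (m : σ →₀ ℕ) (a : R) :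
    aeval (fun v => C (c v) * X v) (monomial m a)
      = monomial m (m.prod (fun v k => c v ^ k) * a) := by
  rw [aeval_monomial, monomial_eq (a := _ * a)]
  simp only [mul_pow, ← map_pow, Finsupp.prod, Finset.prod_mul_distrib, ← map_prod, algebraMap_eq,
    map_mul]
  ring

theorem coeff_aeval_C_mul_X (c : σ → R) (f : MvPolynomial σ R) (m : σ →₀ ℕ) :
    coeff m (aeval (fun v => C (c v) * X v) f) = m.prod (fun v k => c v ^ k) * coeff m f := by
  classical
  induction f using MvPolynomial.induction_on' with
  | monomial d a =>
    rw [aeval_C_mul_X_monomial, coeff_monomial, coeff_monomial]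
    split_ifs with h
    · rw [h]
    · rw [mul_zero]
  | add f g hf hg => rw [map_add, coeff_add, coeff_add, hf, hg, mul_add]

theorem aeval_C_mul_X_monomial_of_mem_support [IsCancelMulZero R] {c : σ → R}
    {f : MvPolynomial σ R} (hf : aeval (fun v => C (c v) * X v) f = f) {m : σ →₀ ℕ}
    (hm : m ∈ f.support) (a : R) :
    aeval (fun v => C (c v) * X v) (monomial m a) = monomial m a := by
  have hweight : m.prod (fun v k => c v ^ k) = 1 := by
    have h := coeff_aeval_C_mul_X c f m
    rw [hf] at h
    exact mul_right_cancel₀ (mem_support_iff.mp hm) (h.symm.trans (one_mul _).symm)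
  rw [aeval_C_mul_X_monomial, hweight, one_mul]

def squaresIdeal (σ R : Type*) [CommSemiring R] : Ideal (MvPolynomial σ R) :=
  Ideal.span (Set.range fun t => X t ^ 2)

theorem prod_X_notMem_squaresIdeal [Fintype σ] [Nontrivial R] :
    (∏ t, X t : MvPolynomial σ R) ∉ squaresIdeal σ R := by
  classical
  have hsq : (Set.range fun t => (X t ^ 2 : MvPolynomial σ R))
      = (fun d => monomial d (1 : R)) '' Set.range fun t => Finsupp.single t 2 := by
    rw [← Set.range_comp]; simp only [Function.comp_def, X_pow_eq_monomial]
  have hprod : (∏ t, X t : MvPolynomial σ R) = monomial (∑ t, Finsupp.single t 1) 1 := by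
    rw [monomial_sum_one]; rfl
  rw [squaresIdeal, hsq, mem_ideal_span_monomial_image, hprod, support_monomial,
    if_neg one_ne_zero]
  simp only [Finset.mem_singleton, forall_eq, Set.mem_range, exists_exists_eq_and, not_exists]
  intro t ht
  simpa [Finsupp.finsetSum_apply, Finsupp.single_apply] using ht t

theorem isHomogeneous_prod_X {ι : Type*} (u : Finset ι) (g : ι → σ) :
    (∏ i ∈ u, X (g i) : MvPolynomial σ R).IsHomogeneous u.card := by
  simpa using IsHomogeneous.prod u (fun i => X (g i)) (fun _ => 1) fun i _ => isHomogeneous_X R _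

end MvPolynomial

theorem dswap_involutive {r s : ℕ} : Function.Involutive (dswap (r := r) (s := s)) := by
  rintro ((i | i) | (j | j)) <;> rfl

theorem dswap_ne_self {r s : ℕ} (v : DVar r s) : dswap v ≠ v := by
  rcases v with (i | i) | (j | j) <;> simp [dswap]

namespace HilbertIdeal

variable {F : Type*} [Field F] {r s : ℕ}

def psiImage (lam : Fin r → F) : DVar r s → MvPolynomial (Fin r ⊕ Fin s) F
  | .inl (.inl i) => C (lam i) * X (.inl i)
  | .inl (.inr i) => X (.inl i)
  | .inr (.inl j) => X (.inr j)
  | .inr (.inr j) => X (.inr j)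

def psi (lam : Fin r → F) : MvPolynomial (DVar r s) F →ₐ[F] MvPolynomial (Fin r ⊕ Fin s) F :=
  aeval (psiImage lam)

theorem psi_comp_sigmaMap_comp_rhoMap (lam : Fin r → F) (hlam : ∀ i, lam i ≠ 0) :
    (psi lam).comp ((sigmaMap F r s).comp (rhoMap F r s lam)) = psi lam := by
  ext ((i | i) | (j | j)) : 1 <;>
    simp [psi, psiImage, sigmaMap, rhoMap, rhoCoeff, dswap, ← mul_assoc, ← C_mul, hlam]

theorem psi_X_mul_X_dswap_mem (lam : Fin r → F) (v : DVar r s) :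
    psi lam (X v * X (dswap v)) ∈ squaresIdeal (Fin r ⊕ Fin s) F := by
  have hsq (t : Fin r ⊕ Fin s) : (X t ^ 2 : MvPolynomial _ F) ∈ squaresIdeal _ F :=
    Ideal.subset_span ⟨t, rfl⟩
  rcases v with (i | i) | (j | j) <;>
    simp only [psi, psiImage, dswap, map_mul, aeval_X, ← sq, hsq]
  · rw [mul_assoc, ← sq]; exact Ideal.mul_mem_left _ _ (hsq _)
  · rw [mul_left_comm, ← sq]; exact Ideal.mul_mem_left _ _ (hsq _)

theorem psi_sigmaMap_monomial_of_mem_support (lam : Fin r → F) (hlam : ∀ i, lam i ≠ 0)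
    {f : MvPolynomial (DVar r s) F} (hf : rhoMap F r s lam f = f) {m : DVar r s →₀ ℕ}
    (hm : m ∈ f.support) (a : F) :
    psi lam (sigmaMap F r s (monomial m a)) = psi lam (monomial m a) := by
  conv_lhs => rw [← aeval_C_mul_X_monomial_of_mem_support (c := rhoCoeff lam) hf hm a]
  exact AlgHom.congr_fun (psi_comp_sigmaMap_comp_rhoMap lam hlam) (monomial m a)

theorem psi_monomial_mem_of_mapDomain_dswap_eq (lam : Fin r → F) {m : DVar r s →₀ ℕ}
    (hm : m ≠ 0) (hfix : m.mapDomain dswap = m) (a : F) :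
    psi lam (monomial m a) ∈ squaresIdeal (Fin r ⊕ Fin s) F := by
  obtain ⟨v, hv⟩ := Finsupp.support_nonempty_iff.mpr hm
  have hdv : m (dswap v) = m v := by
    rw [← Finsupp.mapDomain_apply dswap_involutive.injective m v, hfix]
  have hdvd : X v * X (dswap v) ∣ monomial m a := by
    rw [X, X, monomial_mul, one_mul, monomial_dvd_monomial]
    refine ⟨Or.inr fun t => ?_, one_dvd a⟩
    have := dswap_ne_self v
    have := Finsupp.mem_support_iff.mp hv
    simp only [Finsupp.add_apply, Finsupp.single_apply]
    split_ifs <;> subst_vars <;> first | omega | contradiction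
  obtain ⟨q, hq⟩ := hdvd
  rw [hq, map_mul]
  exact Ideal.mul_mem_right _ _ (psi_X_mul_X_dswap_mem lam v)

theorem psi_mem_squaresIdeal_of_invariant [CharP F 2] (lam : Fin r → F) (hlam : ∀ i, lam i ≠ 0)
    {f : MvPolynomial (DVar r s) F} (hσ : sigmaMap F r s f = f) (hρ : rhoMap F r s lam f = f)
    (h0 : constantCoeff f = 0) : psi lam f ∈ squaresIdeal (Fin r ⊕ Fin s) F := by
  have hcoeff (m : DVar r s →₀ ℕ) : coeff (m.mapDomain dswap) f = coeff m f := by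
    conv_lhs => rw [← hσ]
    exact coeff_rename_mapDomain _ dswap_involutive.injective f m
  rw [← Ideal.Quotient.eq_zero_iff_mem, f.as_sum, map_sum, map_sum]
  refine Finset.sum_involution (fun m _ => m.mapDomain dswap) (fun m hm => ?_)
    (fun m hm hne hfix => hne ?_) (fun m hm => ?_) (fun m _ => ?_)
  · rw [hcoeff, ← rename_monomial, ← map_add]
    change Ideal.Quotient.mk _ (_ + psi lam (sigmaMap F r s _)) = 0
    rw [psi_sigmaMap_monomial_of_mem_support lam hlam hρ hm, CharTwo.add_self_eq_zero, map_zero]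
  · have hm0 : m ≠ 0 := by
      rintro rfl
      exact mem_support_iff.mp hm h0
    exact Ideal.Quotient.eq_zero_iff_mem.mpr
      (psi_monomial_mem_of_mapDomain_dswap_eq lam hm0 hfix _)
  · rw [mem_support_iff, hcoeff]
    exact mem_support_iff.mp hm
  · rw [← Finsupp.mapDomain_comp, dswap_involutive.comp_self, Finsupp.mapDomain_id]

theorem le_comap_psi [CharP F 2] (lam : Fin r → F) (hlam : ∀ i, lam i ≠ 0) :
    HilbertIdeal F r s lam ≤ (squaresIdeal (Fin r ⊕ Fin s) F).comap (psi lam) :=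
  Ideal.span_le.mpr fun _ ⟨hσ, hρ, h0⟩ => psi_mem_squaresIdeal_of_invariant lam hlam hσ hρ h0

theorem psi_prod_y_mul_prod_w (lam : Fin r → F) :
    psi lam ((∏ i, X (.inl (.inr i))) * ∏ j, X (.inr (.inr j)) : MvPolynomial (DVar r s) F)
      = ∏ t, X t := by
  simp [psi, psiImage, map_prod, Fintype.prod_sum_type]

theorem prod_y_mul_prod_w_notMem [CharP F 2] (lam : Fin r → F) (hlam : ∀ i, lam i ≠ 0) :
    ((∏ i, X (.inl (.inr i))) * ∏ j, X (.inr (.inr j)) : MvPolynomial (DVar r s) F)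
      ∉ HilbertIdeal F r s lam := fun h => by
  have hpsi := Ideal.mem_comap.mp (le_comap_psi lam hlam h)
  rw [psi_prod_y_mul_prod_w] at hpsi
  exact prod_X_notMem_squaresIdeal hpsi

end HilbertIdeal

theorem prod_y_w_not_mem_hilbertIdeal_general
    {F : Type*} [Field F] [CharP F 2] {r s p : ℕ} (hp : p.Prime)
    (lam : Fin r → F) (hlam : ∀ i, lam i ^ p = 1 ∧ lam i ≠ 1) :
    ((∏ i : Fin r, X (Sum.inl (Sum.inr i))) * ∏ j : Fin s, X (Sum.inr (Sum.inr j))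
        : MvPolynomial (DVar r s) F) ∉ HilbertIdeal F r s lam ∧
    ∃ f : MvPolynomial (DVar r s) F,
      f.IsHomogeneous (r + s) ∧ f ∉ HilbertIdeal F r s lam := by
  have hlam0 (i : Fin r) : lam i ≠ 0 := (IsUnit.of_pow_eq_one (hlam i).1 hp.ne_zero).ne_zero
  have hnotMem := HilbertIdeal.prod_y_mul_prod_w_notMem (s := s) lam hlam0
  refine ⟨hnotMem, _, ?_, hnotMem⟩
  have hy := isHomogeneous_prod_X (R := F) .univ fun i : Fin r => (.inl (.inr i) : DVar r s)
  have hw := isHomogeneous_prod_X (R := F) .univ fun j : Fin s => (.inr (.inr j) : DVar r s)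
  simpa using hy.mul hw

/-- For `p` an odd prime, the monomial `y₁⋯y_r·w₁⋯w_s` does not lie in the
Hilbert ideal `I_H`; consequently the top degree of the coinvariants is at least `r + s`. -/
theorem prod_y_w_not_mem_hilbertIdeal
    {F : Type*} [Field F] [CharP F 2] {r s p : ℕ} (hp : p.Prime) (hodd : Odd p)
    (ζ : F) (hζ : IsPrimitiveRoot ζ p)
    (lam : Fin r → F) (hlam : ∀ i, lam i ^ p = 1 ∧ lam i ≠ 1) :
    ((∏ i : Fin r, X (Sum.inl (Sum.inr i))) * ∏ j : Fin s, X (Sum.inr (Sum.inr j))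
        : MvPolynomial (DVar r s) F) ∉ HilbertIdeal F r s lam ∧
    ∃ f : MvPolynomial (DVar r s) F,
      f.IsHomogeneous (r + s) ∧ f ∉ HilbertIdeal F r s lam :=
  prod_y_w_not_mem_hilbertIdeal_general hp lam hlam
end
end
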